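/- arXiv:1102.3199 — 2 statements merged into one kernel-verified Lean document; each statement's English description precedes it below -/
import Mathlib

section
/- Let (X; f_1, …, f_N) and (Y; g_1, …, g_N) be point-fibred iterated function systems on nonempty compact Hausdorff spaces X and Y, with the same number N of maps, coding maps π_F : I^∞ → X and π_G : I^∞ → Y, and attractors A_F = π_F(I^∞), A_G = π_G(I^∞). Let Ω_F ⊆ I^∞ be an address space for the first system with section τ_F : A_F → Ω_F. If for all σ, ω in the closure of Ω_F, π_F(σ) = π_F(ω) implies π_G(σ) = π_G(ω), then the fractal transformation T_FG = π_G ∘ τ_F : A_F → A_G is continuous. -/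
/-!
The coding maps are continuous: the approximants `f_{σ_1} ∘ ⋯ ∘ f_{σ_k} (X)` are compact, shrink to
`π σ`, and are the same for every code in the cylinder of `σ` of length `k`. Hence `π_F` restricted
to the compact set `closure Ω_F` is a continuous surjection onto the Hausdorff space `A_F`, so a
quotient map, and the fibre condition says that `T_FG ∘ π_F = π_G` there, which is continuous.
-/

/-- `seqComp f σ k = f (σ 0) ∘ f (σ 1) ∘ ⋯ ∘ f (σ (k-1))`. -/
def seqComp {X : Type*} {N : ℕ} (f : Fin N → X → X) (σ : ℕ → Fin N) : ℕ → X → X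
  | 0 => id
  | k + 1 => seqComp f σ k ∘ f (σ k)

open Set Filter Topology

def IsCodingMap {X : Type*} {N : ℕ} (f : Fin N → X → X) (π : (ℕ → Fin N) → X) : Prop :=
  ∀ σ, ⋂ k, seqComp f σ k '' univ = {π σ}

section seqComp

variable {X : Type*} {N : ℕ} (f : Fin N → X → X)

theorem continuous_seqComp [TopologicalSpace X] (hf : ∀ i, Continuous (f i))
    (σ : ℕ → Fin N) (k : ℕ) : Continuous (seqComp f σ k) := by
  induction k with
  | zero => exact continuous_id
  | succ k ih => exact ih.comp (hf _)

theorem seqComp_eq_of_mem_cylinder {σ ω : ℕ → Fin N} {k : ℕ} (h : ω ∈ PiNat.cylinder σ k) :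
    seqComp f ω k = seqComp f σ k := by
  induction k with
  | zero => rfl
  | succ k ih =>
    rw [PiNat.mem_cylinder_iff] at h
    simp only [seqComp, ih (PiNat.mem_cylinder_iff.2 fun i hi => h i (by omega)),
      h k k.lt_succ_self]

theorem antitone_range_seqComp (σ : ℕ → Fin N) : Antitone fun k => range (seqComp f σ k) :=
  antitone_nat_of_succ_le fun k => range_comp_subset_range (f (σ k)) (seqComp f σ k)

end seqComp

namespace IsCodingMap

variable {X : Type*} {N : ℕ} {f : Fin N → X → X} {π : (ℕ → Fin N) → X}

theorem iInter_range_seqComp (hπ : IsCodingMap f π) (σ : ℕ → Fin N) :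
    ⋂ k, range (seqComp f σ k) = {π σ} := by
  simpa only [image_univ] using hπ σ

theorem mem_range_seqComp (hπ : IsCodingMap f π) (σ : ℕ → Fin N) (k : ℕ) :
    π σ ∈ range (seqComp f σ k) :=
  iInter_subset _ k (hπ.iInter_range_seqComp σ ▸ mem_singleton _)

theorem continuous [TopologicalSpace X] [CompactSpace X] [T2Space X]
    (hf : ∀ i, Continuous (f i)) (hπ : IsCodingMap f π) : Continuous π := by
  refine continuous_iff_continuousAt.2 fun σ U hU => mem_map.2 ?_
  obtain ⟨k, hk⟩ := exists_subset_nhds_of_isCompact (antitone_range_seqComp f σ).directed_ge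
    (fun k => isCompact_range (continuous_seqComp f hf σ k)) (U := U) (by
      rw [hπ.iInter_range_seqComp σ]
      rintro x rfl
      exact hU)
  filter_upwards [(PiNat.isOpen_cylinder _ σ k).mem_nhds (PiNat.self_mem_cylinder σ k)]
    with ω hω
  exact hk (seqComp_eq_of_mem_cylinder f hω ▸ hπ.mem_range_seqComp ω k)

end IsCodingMap

theorem IsCompact.continuousOn_image_of_comp {α β γ : Type*} [TopologicalSpace α]
    [TopologicalSpace β] [T2Space β] [TopologicalSpace γ] {K : Set α} (hK : IsCompact K)
    {p : α → β} (hp : Continuous p) {h : β → γ} (hhp : ContinuousOn (h ∘ p) K) :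
    ContinuousOn h (p '' K) := by
  have : CompactSpace K := isCompact_iff_compactSpace.1 hK
  have hq : IsQuotientMap (imageFactorization p K) :=
    .of_surjective_continuous imageFactorization_surjective (hp.restrict (mapsTo_image p K))
  rw [continuousOn_iff_continuous_domRestrict, hq.continuous_iff]
  exact continuousOn_iff_continuous_domRestrict.1 hhp

theorem fractal_transformation_continuous_general
    {X : Type*} [TopologicalSpace X] [CompactSpace X] [T2Space X]
    {Y : Type*} [TopologicalSpace Y] [CompactSpace Y] [T2Space Y]
    {N : ℕ}
    (f : Fin N → X → X) (hf : ∀ i, Continuous (f i))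
    (g : Fin N → Y → Y) (hg : ∀ i, Continuous (g i))
    (πF : (ℕ → Fin N) → X)
    (hπF : ∀ σ : ℕ → Fin N,
      (⋂ k : ℕ, seqComp f σ k '' (Set.univ : Set X)) = {πF σ})
    (πG : (ℕ → Fin N) → Y)
    (hπG : ∀ σ : ℕ → Fin N,
      (⋂ k : ℕ, seqComp g σ k '' (Set.univ : Set Y)) = {πG σ})
    (ΩF : Set (ℕ → Fin N))
    (τF : X → ℕ → Fin N)
    (hτFmem : ∀ x ∈ Set.range πF, τF x ∈ ΩF)
    (hτFsec : ∀ x ∈ Set.range πF, πF (τF x) = x)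
    (hfibers : ∀ σ ∈ closure ΩF, ∀ ω ∈ closure ΩF, πF σ = πF ω → πG σ = πG ω) :
    ContinuousOn (fun x => πG (τF x)) (Set.range πF) := by
  have hτF_closure : ∀ x ∈ range πF, τF x ∈ closure ΩF :=
    fun x hx => subset_closure (hτFmem x hx)
  have hrange : range πF = πF '' closure ΩF :=
    (image_subset_range _ _).antisymm' fun x hx => ⟨τF x, hτF_closure x hx, hτFsec x hx⟩
  have hlift : EqOn πG ((fun x => πG (τF x)) ∘ πF) (closure ΩF) := fun σ hσ =>
    hfibers σ hσ _ (hτF_closure _ (mem_range_self σ)) (hτFsec _ (mem_range_self σ)).symm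
  rw [hrange]
  exact isClosed_closure.isCompact.continuousOn_image_of_comp (IsCodingMap.continuous hf hπF)
    ((IsCodingMap.continuous hg hπG).continuousOn.congr hlift.symm)

/-- Let `F` and `G` be point-fibred IFSs on nonempty compact Hausdorff
spaces with the same code space, coding maps `π_F`, `π_G` and attractors
`A_F = π_F(I^∞)`, `A_G = π_G(I^∞)`. Let `Ω_F` be an address space for `F` with section
`τ_F`. If for all `σ, ω` in the closure of `Ω_F`, `π_F σ = π_F ω → π_G σ = π_G ω`,
then the fractal transformation `T_FG = π_G ∘ τ_F : A_F → A_G` is continuous. -/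
theorem fractal_transformation_continuous
    {X : Type*} [TopologicalSpace X] [CompactSpace X] [T2Space X] [Nonempty X]
    {Y : Type*} [TopologicalSpace Y] [CompactSpace Y] [T2Space Y] [Nonempty Y]
    {N : ℕ} (hN : 0 < N)
    (f : Fin N → X → X) (hf : ∀ i, Continuous (f i))
    (g : Fin N → Y → Y) (hg : ∀ i, Continuous (g i))
    (πF : (ℕ → Fin N) → X)
    (hπF : ∀ σ : ℕ → Fin N,
      (⋂ k : ℕ, seqComp f σ k '' (Set.univ : Set X)) = {πF σ})
    (πG : (ℕ → Fin N) → Y)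
    (hπG : ∀ σ : ℕ → Fin N,
      (⋂ k : ℕ, seqComp g σ k '' (Set.univ : Set Y)) = {πG σ})
    (ΩF : Set (ℕ → Fin N)) (hΩFonto : πF '' ΩF = Set.range πF)
    (hΩFinj : Set.InjOn πF ΩF)
    (τF : X → ℕ → Fin N)
    (hτFmem : ∀ x ∈ Set.range πF, τF x ∈ ΩF)
    (hτFsec : ∀ x ∈ Set.range πF, πF (τF x) = x)
    (hfibers : ∀ σ ∈ closure ΩF, ∀ ω ∈ closure ΩF, πF σ = πF ω → πG σ = πG ω) :
    ContinuousOn (fun x => πG (τF x)) (Set.range πF) :=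
  fractal_transformation_continuous_general f hf g hg πF hπF πG hπG ΩF τF hτFmem hτFsec hfibers
end

section
/- Let X be a nonempty compact Hausdorff space and let (X; f_1, …, f_N) be a point-fibred iterated function system on X with coding map π : I^∞ → X and attractor A = π(I^∞). Order I^∞ so that for σ ≠ ω, σ ≺ ω if and only if σ_k < ω_k at the least index k where σ and ω differ (lexicographic order on {1,…,N}^ℕ). Then for every x ∈ A the fiber π^{-1}(x) = {σ ∈ I^∞ : π(σ) = x} possesses a greatest element with respect to this order. -/
lemma seqComp_congr {X : Type*} {N : ℕ} (f : Fin N → X → X) {σ τ : ℕ → Fin N}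
    (k : ℕ) (h : ∀ j < k, σ j = τ j) : seqComp f σ k = seqComp f τ k := by
  induction k with
  | zero => rfl
  | succ k ih =>
      have h1 : σ k = τ k := h k (Nat.lt_succ_self k)
      have h2 := ih (fun j hj => h j (hj.trans (Nat.lt_succ_self k)))
      simp [seqComp, h1, h2]

/-- For a point-fibred IFS with coding map `π` and attractor
`A = π(I^∞)`, every fiber `π⁻¹(x)`, `x ∈ A`, possesses a greatest element with
respect to the lexicographic order on `I^∞ = {1,…,N}^ℕ` (at the least index where
two distinct addresses differ, the greater one has the larger symbol). -/
theorem fiber_has_top_address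
    {X : Type*} [TopologicalSpace X] [CompactSpace X] [T2Space X] [Nonempty X]
    {N : ℕ} (hN : 0 < N) (f : Fin N → X → X) (hf : ∀ i, Continuous (f i))
    (π : (ℕ → Fin N) → X)
    (hπ : ∀ σ : ℕ → Fin N,
      (⋂ k : ℕ, seqComp f σ k '' (Set.univ : Set X)) = {π σ}) :
    ∀ x ∈ Set.range π, ∃ σ : ℕ → Fin N, π σ = x ∧
      ∀ ω : ℕ → Fin N, π ω = x → ω ≠ σ →
        ∃ k : ℕ, (∀ j < k, ω j = σ j) ∧ ω k < σ k := by
  intro x hx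
  obtain ⟨ω0, hω0⟩ := hx
  -- a point is in each finite-level image of its address
  have mem_img : ∀ (η : ℕ → Fin N) (k : ℕ),
      π η ∈ seqComp f η k '' (Set.univ : Set X) := by
    intro η k
    have : π η ∈ ⋂ k : ℕ, seqComp f η k '' (Set.univ : Set X) := by
      rw [hπ η]; exact rfl
    exact Set.mem_iInter.mp this k
  -- greedy step: among fiber elements agreeing with `prev` below `k`, one with
  -- maximal `k`-th symbol
  have key : ∀ (prev : ℕ → Fin N), π prev = x → ∀ k : ℕ,
      ∃ η : ℕ → Fin N, π η = x ∧ (∀ j < k, η j = prev j) ∧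
        (∀ η' : ℕ → Fin N, π η' = x → (∀ j < k, η' j = prev j) → η' k ≤ η k) := by
    intro prev hprev k
    classical
    set V : Finset (Fin N) := Finset.univ.filter
      (fun i => ∃ η : ℕ → Fin N, π η = x ∧ (∀ j < k, η j = prev j) ∧ η k = i) with hV
    have hVne : V.Nonempty := by
      refine ⟨prev k, ?_⟩
      simp only [hV, Finset.mem_filter, Finset.mem_univ, true_and]
      exact ⟨prev, hprev, fun j _ => rfl, rfl⟩
    obtain ⟨η, hη1, hη2, hη3⟩ : ∃ η : ℕ → Fin N, π η = x ∧ (∀ j < k, η j = prev j) ∧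
        η k = V.max' hVne := by
      have := V.max'_mem hVne
      simp only [hV, Finset.mem_filter, Finset.mem_univ, true_and] at this
      obtain ⟨η, h1, h2, h3⟩ := this
      exact ⟨η, h1, h2, h3⟩
    refine ⟨η, hη1, hη2, fun η' h1 h2 => ?_⟩
    rw [hη3]
    apply V.le_max'
    simp only [hV, Finset.mem_filter, Finset.mem_univ, true_and]
    exact ⟨η', h1, h2, rfl⟩
  -- the recursively defined approximating sequence of fiber elements
  let ω : ℕ → {η : ℕ → Fin N // π η = x} := fun k =>
    Nat.rec ⟨ω0, hω0⟩
      (fun k prev => ⟨Classical.choose (key prev.1 prev.2 k),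
        (Classical.choose_spec (key prev.1 prev.2 k)).1⟩) k
  have ωsucc : ∀ k : ℕ, (ω (k + 1)).1 =
      Classical.choose (key (ω k).1 (ω k).2 k) := fun k => rfl
  have spec : ∀ k : ℕ,
      (∀ j < k, (ω (k + 1)).1 j = (ω k).1 j) ∧
      (∀ η' : ℕ → Fin N, π η' = x → (∀ j < k, η' j = (ω k).1 j) →
        η' k ≤ (ω (k + 1)).1 k) := by
    intro k
    rw [ωsucc k]
    exact ⟨(Classical.choose_spec (key (ω k).1 (ω k).2 k)).2.1,
      (Classical.choose_spec (key (ω k).1 (ω k).2 k)).2.2⟩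
  set σ : ℕ → Fin N := fun k => (ω (k + 1)).1 k with hσ
  -- `ω k` agrees with `σ` below `k`
  have agree : ∀ k : ℕ, ∀ j < k, (ω k).1 j = σ j := by
    intro k
    induction k with
    | zero => intro j hj; exact absurd hj (Nat.not_lt_zero j)
    | succ k ih =>
        intro j hj
        rcases Nat.lt_succ_iff_lt_or_eq.mp hj with h | h
        · rw [(spec k).1 j h, ih j h]
        · subst h; rfl
  have hπσ : π σ = x := by
    have hxmem : x ∈ ⋂ k : ℕ, seqComp f σ k '' (Set.univ : Set X) := by
      refine Set.mem_iInter.mpr fun k => ?_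
      have := mem_img (ω k).1 k
      rw [(ω k).2] at this
      rwa [seqComp_congr f k (agree k)] at this
    rw [hπ σ] at hxmem
    exact hxmem.symm
  refine ⟨σ, hπσ, fun η hη hne => ?_⟩
  have hex : ∃ k, η k ≠ σ k := by
    by_contra h
    push_neg at h
    exact hne (funext h)
  set k := Nat.find hex with hk
  have hkagree : ∀ j < k, η j = σ j := fun j hj => by
    have := Nat.find_min hex hj
    simpa using this
  refine ⟨k, hkagree, ?_⟩
  have hle : η k ≤ σ k := by
    apply (spec k).2 η hη
    intro j hj
    rw [hkagree j hj, agree k j hj]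
  exact lt_of_le_of_ne hle (Nat.find_spec hex)
end
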